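/- Let n ∈ ℝ and let q = (n,a,b,c) ∈ ℝ⁴ satisfy (n+a+b+c)² = 2(n²+a²+b²+c²), n+a ≥ 0, n+b ≥ 0. For a Descartes quadruple q' = (n,a',b',c') of this form, write Q_{q'} for the binary quadratic form [n+a', n+a'+b'−c', n+b']. Then the sets {Q_{Mq} : M ∈ Ap₁} and {Q_q ∘ γ : γ ∈ GL(2,ℤ)} are equal, where Q ∘ γ denotes the form Q(αx+βy, γ'x+δy) for γ = [[α,β],[γ',δ]]. In particular, every M ∈ Ap₁ maps q to a quadruple of the same shape (first entry n, satisfying the Descartes equation with the corresponding positivity), and the Ap₁-orbit of q corresponds exactly to the GL(2,ℤ)-equivalence class of the form Q_q. -/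

import Mathlib

open Matrix

/-- The Apollonian move `S₄` (as a real matrix, acting on real quadruples). -/
def S₄ : Matrix (Fin 4) (Fin 4) ℝ := !![1,0,0,0; 0,1,0,0; 0,0,1,0; 2,2,2,-1]

/-- The permutation matrix swapping coordinates 2 and 3. -/
def P₂₃ : Matrix (Fin 4) (Fin 4) ℝ := !![1,0,0,0; 0,0,1,0; 0,1,0,0; 0,0,0,1]

/-- The permutation matrix swapping coordinates 2 and 4. -/
def P₂₄ : Matrix (Fin 4) (Fin 4) ℝ := !![1,0,0,0; 0,0,0,1; 0,0,1,0; 0,1,0,0]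

/-- The group `Ap₁` generated by `P₂₃`, `P₂₄`, `S₄`; since the generators are
involutions, it consists exactly of all finite products of the generators. -/
def Ap₁ : Submonoid (Matrix (Fin 4) (Fin 4) ℝ) := Submonoid.closure {P₂₃, P₂₄, S₄}

/-- The binary quadratic form `[n+a, n+a+b−c, n+b]` attached to the Descartes
quadruple `q = (n,a,b,c)`, as a function on `ℝ × ℝ`. -/
def Qform (q : Fin 4 → ℝ) : ℝ × ℝ → ℝ := fun p =>
  (q 0 + q 1) * p.1 ^ 2 + (q 0 + q 1 + q 2 - q 3) * p.1 * p.2 + (q 0 + q 2) * p.2 ^ 2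

/-!
Each generator of `Ap₁` changes `Q_q` by an integral substitution of the variables: `P₂₃` swaps
`x` and `y`, `S₄` replaces `y` by `-y`, and `P₂₄` sends `(x, y)` to `(-x, x + y)`. These three
involutions `τ₂₃, τ₄, τ₂₄` generate `GL(2, ℤ)`: `S = τ₂₃ τ₄` and `T = τ₄ τ₂₃ τ₂₄ τ₂₃` generate
`SL(2, ℤ)`, and `det τ₄ = -1`. So the orbit of `Q_q` under `Ap₁` is its `GL(2, ℤ)`-class.

The shape of `q = (n, a, b, c)` is preserved because the Descartes equation says that `Q_q` has
discriminant `-4n²`; with `n + a, n + b ≥ 0` the form is positive semidefinite, so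
`Q_q(1, -1) = n + c ≥ 0`, which is the inequality that `P₂₄` needs.
-/

section substForm

variable {R α : Type*} [CommRing R]

def substForm (γ : Matrix (Fin 2) (Fin 2) ℤ) (F : R × R → α) : R × R → α := fun p =>
  F ((γ 0 0 : R) * p.1 + (γ 0 1 : R) * p.2, (γ 1 0 : R) * p.1 + (γ 1 1 : R) * p.2)

@[simp]
lemma substForm_one (F : R × R → α) : substForm 1 F = F := by
  funext p
  simp [substForm]

lemma substForm_mul (γ δ : Matrix (Fin 2) (Fin 2) ℤ) (F : R × R → α) :
    substForm (γ * δ) F = substForm δ (substForm γ F) := by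
  funext p
  refine congrArg F (Prod.ext ?_ ?_) <;>
    simp only [Matrix.mul_apply, Fin.sum_univ_two, Int.cast_add, Int.cast_mul] <;> ring

end substForm

lemma Matrix.mulVec_mem_of_mem_closure {ι R : Type*} [Fintype ι] [DecidableEq ι] [Semiring R]
    {s : Set (Matrix ι ι R)} {P : (ι → R) → Prop} (hs : ∀ M ∈ s, ∀ v, P v → P (M *ᵥ v))
    {M : Matrix ι ι R} (hM : M ∈ Submonoid.closure s) {v : ι → R} (hv : P v) : P (M *ᵥ v) := by
  induction hM using Submonoid.closure_induction generalizing v with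
  | mem N hN => exact hs N hN v hv
  | one => rwa [one_mulVec]
  | mul N N' _ _ hN hN' => rw [← mulVec_mulVec]; exact hN (hN' hv)

lemma sub_add_nonneg_of_sq_le_four_mul {R : Type*} [CommRing R] [LinearOrder R]
    [IsStrictOrderedRing R] {A B C : R} (hA : 0 ≤ A) (hC : 0 ≤ C) (h : B ^ 2 ≤ 4 * A * C) :
    0 ≤ A - B + C := by
  nlinarith [sq_nonneg (A - C)]

def τ₂₃ : Matrix (Fin 2) (Fin 2) ℤ := !![0, 1; 1, 0]

def τ₂₄ : Matrix (Fin 2) (Fin 2) ℤ := !![-1, 0; 1, 1]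

def τ₄ : Matrix (Fin 2) (Fin 2) ℤ := !![1, 0; 0, -1]

lemma τ₄_mul_self : τ₄ * τ₄ = 1 := by
  decide

lemma det_τ₄ : τ₄.det = -1 := by
  decide

open ModularGroup MatrixGroups in
lemma coe_mem_closure_τ (g : SL(2, ℤ)) :
    (g : Matrix (Fin 2) (Fin 2) ℤ) ∈ Submonoid.closure {τ₂₃, τ₂₄, τ₄} := by
  have h₂₃ : τ₂₃ ∈ Submonoid.closure {τ₂₃, τ₂₄, τ₄} := Submonoid.subset_closure (by simp)
  have h₂₄ : τ₂₄ ∈ Submonoid.closure {τ₂₃, τ₂₄, τ₄} := Submonoid.subset_closure (by simp)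
  have h₄ : τ₄ ∈ Submonoid.closure {τ₂₃, τ₂₄, τ₄} := Submonoid.subset_closure (by simp)
  have hg : g ∈ Subgroup.closure {S, T} := by
    simp [SpecialLinearGroup.SL2Z_generators]
  induction hg using Subgroup.closure_induction'' with
  | mem x hx =>
    rcases hx with rfl | rfl
    · rw [show (S : Matrix (Fin 2) (Fin 2) ℤ) = τ₂₃ * τ₄ by decide]
      exact mul_mem h₂₃ h₄
    · rw [show (T : Matrix (Fin 2) (Fin 2) ℤ) = τ₄ * τ₂₃ * τ₂₄ * τ₂₃ by decide]
      exact mul_mem (mul_mem (mul_mem h₄ h₂₃) h₂₄) h₂₃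
  | inv_mem x hx =>
    rcases hx with rfl | rfl
    · rw [show ((S⁻¹ : SL(2, ℤ)) : Matrix (Fin 2) (Fin 2) ℤ) = τ₄ * τ₂₃ by decide]
      exact mul_mem h₄ h₂₃
    · rw [show ((T⁻¹ : SL(2, ℤ)) : Matrix (Fin 2) (Fin 2) ℤ) = τ₂₃ * τ₂₄ * τ₂₃ * τ₄ by decide]
      exact mul_mem (mul_mem (mul_mem h₂₃ h₂₄) h₂₃) h₄
  | one => exact one_mem _
  | mul x y _ _ hx hy => exact mul_mem hx hy

open MatrixGroups in
lemma mem_closure_τ_of_det {γ : Matrix (Fin 2) (Fin 2) ℤ} (hdet : γ.det = 1 ∨ γ.det = -1) :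
    γ ∈ Submonoid.closure {τ₂₃, τ₂₄, τ₄} := by
  rcases hdet with hdet | hdet
  · exact coe_mem_closure_τ ⟨γ, hdet⟩
  · have hτγ : (τ₄ * γ).det = 1 := by rw [det_mul, det_τ₄, hdet]; norm_num
    rw [← one_mul γ, ← τ₄_mul_self, mul_assoc]
    exact mul_mem (Submonoid.subset_closure (by simp)) (coe_mem_closure_τ ⟨_, hτγ⟩)

lemma P₂₃_mulVec (v : Fin 4 → ℝ) : P₂₃ *ᵥ v = ![v 0, v 2, v 1, v 3] := by
  ext i; fin_cases i <;> simp [P₂₃, mulVec, dotProduct, Fin.sum_univ_four]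

lemma P₂₄_mulVec (v : Fin 4 → ℝ) : P₂₄ *ᵥ v = ![v 0, v 3, v 2, v 1] := by
  ext i; fin_cases i <;> simp [P₂₄, mulVec, dotProduct, Fin.sum_univ_four]

lemma S₄_mulVec (v : Fin 4 → ℝ) : S₄ *ᵥ v = ![v 0, v 1, v 2, 2 * (v 0 + v 1 + v 2) - v 3] := by
  ext i; fin_cases i <;> simp [S₄, mulVec, dotProduct, Fin.sum_univ_four]; ring

def RealizesSubst (M : Matrix (Fin 4) (Fin 4) ℝ) (γ : Matrix (Fin 2) (Fin 2) ℤ) : Prop :=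
  ∀ v, Qform (M *ᵥ v) = substForm γ (Qform v)

lemma realizesSubst_one : RealizesSubst 1 1 := by
  simp [RealizesSubst]

lemma RealizesSubst.mul {M N : Matrix (Fin 4) (Fin 4) ℝ} {γ δ : Matrix (Fin 2) (Fin 2) ℤ}
    (hM : RealizesSubst M γ) (hN : RealizesSubst N δ) : RealizesSubst (M * N) (δ * γ) := by
  intro v
  rw [← mulVec_mulVec, hM, hN, substForm_mul]

lemma realizesSubst_P₂₃ : RealizesSubst P₂₃ τ₂₃ := by
  intro v; funext p
  simp [P₂₃_mulVec, Qform, substForm, τ₂₃]; ring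

lemma realizesSubst_P₂₄ : RealizesSubst P₂₄ τ₂₄ := by
  intro v; funext p
  simp [P₂₄_mulVec, Qform, substForm, τ₂₄]; ring

lemma realizesSubst_S₄ : RealizesSubst S₄ τ₄ := by
  intro v; funext p
  simp [S₄_mulVec, Qform, substForm, τ₄]; ring

lemma exists_realizesSubst_of_mem_Ap₁ {M : Matrix (Fin 4) (Fin 4) ℝ} (hM : M ∈ Ap₁) :
    ∃ γ : Matrix (Fin 2) (Fin 2) ℤ, (γ.det = 1 ∨ γ.det = -1) ∧ RealizesSubst M γ := by
  induction hM using Submonoid.closure_induction with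
  | mem x hx =>
    rcases hx with rfl | rfl | rfl
    · exact ⟨τ₂₃, Or.inr (by decide), realizesSubst_P₂₃⟩
    · exact ⟨τ₂₄, Or.inr (by decide), realizesSubst_P₂₄⟩
    · exact ⟨τ₄, Or.inr det_τ₄, realizesSubst_S₄⟩
  | one => exact ⟨1, Or.inl det_one, realizesSubst_one⟩
  | mul x y _ _ hx hy =>
    obtain ⟨γ, hγ, hxγ⟩ := hx
    obtain ⟨δ, hδ, hyδ⟩ := hy
    refine ⟨δ * γ, ?_, hxγ.mul hyδ⟩
    rw [det_mul]
    rcases hγ with h | h <;> rcases hδ with h' | h' <;> simp [h, h']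

lemma exists_mem_Ap₁_realizesSubst {γ : Matrix (Fin 2) (Fin 2) ℤ}
    (hγ : γ ∈ Submonoid.closure {τ₂₃, τ₂₄, τ₄}) : ∃ M ∈ Ap₁, RealizesSubst M γ := by
  induction hγ using Submonoid.closure_induction with
  | mem x hx =>
    rcases hx with rfl | rfl | rfl
    · exact ⟨P₂₃, Submonoid.subset_closure (by simp), realizesSubst_P₂₃⟩
    · exact ⟨P₂₄, Submonoid.subset_closure (by simp), realizesSubst_P₂₄⟩
    · exact ⟨S₄, Submonoid.subset_closure (by simp), realizesSubst_S₄⟩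
  | one => exact ⟨1, one_mem _, realizesSubst_one⟩
  | mul x y _ _ hx hy =>
    obtain ⟨M, hM, hMx⟩ := hx
    obtain ⟨N, hN, hNy⟩ := hy
    exact ⟨N * M, mul_mem hN hM, hNy.mul hMx⟩

def DescartesShape (n : ℝ) (v : Fin 4 → ℝ) : Prop :=
  v 0 = n ∧ (v 0 + v 1 + v 2 + v 3) ^ 2 = 2 * (v 0 ^ 2 + v 1 ^ 2 + v 2 ^ 2 + v 3 ^ 2) ∧
    0 ≤ v 0 + v 1 ∧ 0 ≤ v 0 + v 2

namespace DescartesShape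

variable {n : ℝ} {v : Fin 4 → ℝ}

lemma add_three_nonneg (hv : DescartesShape n v) : 0 ≤ v 0 + v 3 := by
  obtain ⟨-, hd, h1, h2⟩ := hv
  have hdisc : (v 0 + v 1 + v 2 - v 3) ^ 2 - 4 * (v 0 + v 1) * (v 0 + v 2) = -4 * v 0 ^ 2 := by
    linear_combination -hd
  have hpsd := sub_add_nonneg_of_sq_le_four_mul (B := v 0 + v 1 + v 2 - v 3) h1 h2
    (by linarith [sq_nonneg (v 0)])
  linarith

lemma P₂₃_mulVec (hv : DescartesShape n v) : DescartesShape n (P₂₃ *ᵥ v) := by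
  obtain ⟨h0, hd, h1, h2⟩ := hv
  simp only [DescartesShape, _root_.P₂₃_mulVec, cons_val]
  exact ⟨h0, by linear_combination hd, h2, h1⟩

lemma P₂₄_mulVec (hv : DescartesShape n v) : DescartesShape n (P₂₄ *ᵥ v) := by
  have h3 := hv.add_three_nonneg
  obtain ⟨h0, hd, -, h2⟩ := hv
  simp only [DescartesShape, _root_.P₂₄_mulVec, cons_val]
  exact ⟨h0, by linear_combination hd, h3, h2⟩

lemma S₄_mulVec (hv : DescartesShape n v) : DescartesShape n (S₄ *ᵥ v) := by
  obtain ⟨h0, hd, h1, h2⟩ := hv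
  simp only [DescartesShape, _root_.S₄_mulVec, cons_val]
  exact ⟨h0, by linear_combination hd, h1, h2⟩

lemma mulVec_of_mem_Ap₁ {M : Matrix (Fin 4) (Fin 4) ℝ} (hM : M ∈ Ap₁)
    (hv : DescartesShape n v) : DescartesShape n (M *ᵥ v) := by
  refine mulVec_mem_of_mem_closure ?_ hM hv
  rintro N (rfl | rfl | rfl) w hw
  exacts [hw.P₂₃_mulVec, hw.P₂₄_mulVec, hw.S₄_mulVec]

end DescartesShape

/-- Every `M ∈ Ap₁` maps `q` to a quadruple of the same shape, and the
`Ap₁`-orbit of `q` corresponds exactly to the `GL(2,ℤ)`-equivalence class of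
the form `Q_q` (acting by linear substitution of variables). -/
theorem ap1_orbit_is_gl2z_class (n : ℝ) (q : Fin 4 → ℝ)
    (h0 : q 0 = n)
    (hdesc : (q 0 + q 1 + q 2 + q 3) ^ 2
      = 2 * ((q 0) ^ 2 + (q 1) ^ 2 + (q 2) ^ 2 + (q 3) ^ 2))
    (h1 : 0 ≤ q 0 + q 1) (h2 : 0 ≤ q 0 + q 2) :
    (∀ M ∈ Ap₁, (M.mulVec q) 0 = n ∧
      ((M.mulVec q) 0 + (M.mulVec q) 1 + (M.mulVec q) 2 + (M.mulVec q) 3) ^ 2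
        = 2 * (((M.mulVec q) 0) ^ 2 + ((M.mulVec q) 1) ^ 2 + ((M.mulVec q) 2) ^ 2
            + ((M.mulVec q) 3) ^ 2) ∧
      0 ≤ (M.mulVec q) 0 + (M.mulVec q) 1 ∧ 0 ≤ (M.mulVec q) 0 + (M.mulVec q) 2) ∧
    {f : ℝ × ℝ → ℝ | ∃ M ∈ Ap₁, f = Qform (M.mulVec q)} =
      {f : ℝ × ℝ → ℝ | ∃ γ : Matrix (Fin 2) (Fin 2) ℤ, (γ.det = 1 ∨ γ.det = -1) ∧
        f = fun p => Qform q
          ((γ 0 0 : ℝ) * p.1 + (γ 0 1 : ℝ) * p.2, (γ 1 0 : ℝ) * p.1 + (γ 1 1 : ℝ) * p.2)} := by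
  refine ⟨fun M hM => DescartesShape.mulVec_of_mem_Ap₁ hM ⟨h0, hdesc, h1, h2⟩, ?_⟩
  ext f
  constructor
  · rintro ⟨M, hM, rfl⟩
    obtain ⟨γ, hdet, hMγ⟩ := exists_realizesSubst_of_mem_Ap₁ hM
    exact ⟨γ, hdet, hMγ q⟩
  · rintro ⟨γ, hdet, rfl⟩
    obtain ⟨M, hM, hMγ⟩ := exists_mem_Ap₁_realizesSubst (mem_closure_τ_of_det hdet)
    exact ⟨M, hM, (hMγ q).symm⟩
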